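/- (Dense model theorem.) For every ε > 0 there exists η with 0 < η ≤ 1 such that the following holds. Let X be a finite nonempty set and let 𝓕 be a family of functions X → [−1,1]. Let ν : X → ℝ be nonnegative with 𝔼[ν] ≤ 1 + η and such that |𝔼[(ν − 1) · ∏_{i=1}^k F_i]| ≤ η for every positive integer k and all F_1,…,F_k ∈ 𝓕. Then for every g : X → ℝ with 0 ≤ g ≤ ν pointwise there exists w : X → [0,1] such that |𝔼[(g − w)·F]| ≤ ε for every F ∈ 𝓕. -/

import Mathlib

/-!
By compactness of `[0,1]^X` it suffices to treat finitely many test functions, closed under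
negation. If no `w` worked for them, Hahn–Banach separation in `ℝ^ι` (a minimax argument) would
give a convex combination `t = ∑ λᵢ Fᵢ` with `𝔼[(g - w) t] > ε` for every `w`; testing against
`w = 1_{t > 0}` and using `g ≤ ν` yields `𝔼[(ν - 1) t⁺] > ε`. But by Weierstrass `t⁺` is
uniformly `γ`-close on `[-1,1]` to a polynomial without constant term, and every power `tʲ`
expands into a convex combination of `j`-fold products of the `Fᵢ`, whose correlations with
`ν - 1` are at most `η`. Hence `𝔼[(ν - 1) t⁺] ≤ M η + γ (2 + η)`, where `M` is the `ℓ¹`-norm of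
the coefficients, and this is at most `ε` once `γ` and `η` are small.
-/

open Finset

/-- The average of a real-valued function on a finite type. -/
noncomputable def avg (α : Type*) [Fintype α] (f : α → ℝ) : ℝ :=
  (∑ x, f x) / (Fintype.card α : ℝ)

open Set Polynomial
open scoped BigOperators

lemma avg_eq_expect {α : Type*} [Fintype α] (f : α → ℝ) : avg α f = 𝔼 x, f x :=
  (Fintype.expect_eq_sum_div_card f).symm

theorem exists_polynomial_coeff_zero_eq_zero_near {f : ℝ → ℝ} {a b : ℝ}
    (hf : ContinuousOn f (Icc a b)) (h0 : (0 : ℝ) ∈ Icc a b) (hf0 : f 0 = 0) {γ : ℝ} (hγ : 0 < γ) :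
    ∃ q : ℝ[X], q.coeff 0 = 0 ∧ ∀ r ∈ Icc a b, |q.eval r - f r| < γ := by
  obtain ⟨p, hp⟩ := exists_polynomial_near_of_continuousOn a b f hf (γ / 2) (half_pos hγ)
  refine ⟨p - C (p.eval 0), by simp [coeff_zero_eq_eval_zero], fun r hr => ?_⟩
  have h₀ := hp 0 h0
  rw [hf0, sub_zero] at h₀
  calc |(p - C (p.eval 0)).eval r - f r|
      = |(p.eval r - f r) - p.eval 0| := by rw [eval_sub, eval_C, sub_right_comm]
    _ ≤ |p.eval r - f r| + |p.eval 0| := abs_sub _ _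
    _ < γ := by linarith [hp r hr]

section

variable {X ι : Type*} [Fintype X]

lemma abs_expect_mul_prod_mul_le {κ : Type*} (φ : X → ℝ) (F : ι → X → ℝ) {σ : κ → ℝ}
    (hσ : ∀ a, |σ a| ≤ 1) {k : ℕ} (c : Fin k → ι × κ) {η : ℝ}
    (h : |𝔼 x, φ x * ∏ l, F (c l).1 x| ≤ η) :
    |𝔼 x, φ x * ∏ l, σ (c l).2 * F (c l).1 x| ≤ η := by
  simp only [prod_mul_distrib, mul_left_comm (φ _), ← mul_expect, abs_mul]
  rw [abs_prod]
  exact (mul_le_of_le_one_left (abs_nonneg _)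
    (prod_le_one (fun _ _ => abs_nonneg _) fun _ _ => hσ _)).trans h

variable [Fintype ι]

lemma abs_expect_mul_pow_le_of_mem_stdSimplex (φ : X → ℝ) (s : ι → X → ℝ) {lam : ι → ℝ}
    (hlam : lam ∈ stdSimplex ℝ ι) {η : ℝ} (j : ℕ)
    (h : ∀ c : Fin j → ι, |𝔼 x, φ x * ∏ l, s (c l) x| ≤ η) :
    |𝔼 x, φ x * (∑ i, lam i * s i x) ^ j| ≤ η := by
  have hw : ∀ c : Fin j → ι, 0 ≤ ∏ l, lam (c l) := fun c => prod_nonneg fun l _ => hlam.1 _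
  have expand : ∀ x, φ x * (∑ i, lam i * s i x) ^ j
      = ∑ c : Fin j → ι, (∏ l, lam (c l)) * (φ x * ∏ l, s (c l) x) := fun x => by
    simp only [Fintype.sum_pow, mul_sum, prod_mul_distrib]
    exact sum_congr rfl fun c _ => by ring
  calc |𝔼 x, φ x * (∑ i, lam i * s i x) ^ j|
      = |∑ c : Fin j → ι, (∏ l, lam (c l)) * 𝔼 x, φ x * ∏ l, s (c l) x| := by
        simp only [expand, expect_sum_comm, mul_expect]
    _ ≤ ∑ c : Fin j → ι, (∏ l, lam (c l)) * η := by
        refine (abs_sum_le_sum_abs _ _).trans (sum_le_sum fun c _ => ?_)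
        rw [abs_mul, abs_of_nonneg (hw c)]
        exact mul_le_mul_of_nonneg_left (h c) (hw c)
    _ = η := by rw [← sum_mul, ← Fintype.sum_pow, hlam.2, one_pow, one_mul]

lemma abs_expect_mul_eval_le (φ t : X → ℝ) (q : ℝ[X]) {η : ℝ}
    (h : ∀ j ∈ q.support, |𝔼 x, φ x * t x ^ j| ≤ η) :
    |𝔼 x, φ x * q.eval (t x)| ≤ (∑ j ∈ q.support, |q.coeff j|) * η := by
  have expand : ∀ x, φ x * q.eval (t x) = ∑ j ∈ q.support, q.coeff j * (φ x * t x ^ j) :=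
    fun x => by
      rw [eval_eq_sum, Polynomial.sum_def, mul_sum]
      exact sum_congr rfl fun j _ => by ring
  simp only [expand, expect_sum_comm, ← mul_expect, sum_mul]
  refine (abs_sum_le_sum_abs _ _).trans (sum_le_sum fun j hj => ?_)
  rw [abs_mul]
  exact mul_le_mul_of_nonneg_left (h j hj) (abs_nonneg _)

lemma expect_mul_max_zero_le (φ t : X → ℝ) {a b : ℝ} (ht : ∀ x, t x ∈ Icc a b) (q : ℝ[X])
    {η γ : ℝ} (hcorr : ∀ j ∈ q.support, |𝔼 x, φ x * t x ^ j| ≤ η)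
    (happrox : ∀ r ∈ Icc a b, |q.eval r - max r 0| ≤ γ) :
    𝔼 x, φ x * max (t x) 0 ≤ (∑ j ∈ q.support, |q.coeff j|) * η + γ * 𝔼 x, |φ x| := by
  have herr : ∀ x, φ x * (max (t x) 0 - q.eval (t x)) ≤ γ * |φ x| := fun x => by
    rw [mul_comm γ]
    refine (le_abs_self _).trans ?_
    rw [abs_mul, abs_sub_comm]
    exact mul_le_mul_of_nonneg_left (happrox _ (ht x)) (abs_nonneg _)
  calc 𝔼 x, φ x * max (t x) 0
      = 𝔼 x, φ x * q.eval (t x) + 𝔼 x, φ x * (max (t x) 0 - q.eval (t x)) := by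
        rw [← expect_add_distrib]; exact expect_congr rfl fun x _ => by ring
    _ ≤ (∑ j ∈ q.support, |q.coeff j|) * η + γ * 𝔼 x, |φ x| := by
        gcongr
        · exact (le_abs_self _).trans (abs_expect_mul_eval_le φ t q hcorr)
        · rw [mul_expect]; exact expect_le_expect fun x _ => herr x

theorem exists_mem_stdSimplex_forall_lt_sum_mul {A : Set (ι → ℝ)} (hconv : Convex ℝ A)
    (hcomp : IsCompact A) (hne : A.Nonempty) {ε : ℝ} (h : ∀ a ∈ A, ∃ i, ε < a i) :
    ∃ lam ∈ stdSimplex ℝ ι, ∀ a ∈ A, ε < ∑ i, lam i * a i := by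
  classical
  set B : Set (ι → ℝ) := univ.pi fun _ => Iic ε
  have hdisj : Disjoint A B := disjoint_left.2 fun a ha hb => by
    obtain ⟨i, hi⟩ := h a ha
    exact (hb i (mem_univ i)).not_gt hi
  obtain ⟨f, u, v, hfA, huv, hfB⟩ := geometric_hahn_banach_compact_closed hconv hcomp
    (convex_pi fun _ _ => convex_Iic ε) (isClosed_set_pi fun _ _ => isClosed_Iic) hdisj
  set e : ι → ι → ℝ := fun i j => if i = j then 1 else 0
  set μ : ι → ℝ := fun i => -f (e i)
  have hf : ∀ y, f y = -∑ i, μ i * y i := fun y => by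
    simpa [μ, e, mul_comm] using (f : (ι → ℝ) →ₗ[ℝ] ℝ).pi_apply_eq_sum_univ y
  have hεB : (fun _ => ε) ∈ B := fun _ _ => Set.mem_Iic.2 le_rfl
  -- Otherwise `f` would be unbounded below on `B`, which contains `ε - R • e i` for all `R ≥ 0`.
  have hμ : ∀ i, 0 ≤ μ i := fun i => by
    by_contra! hi
    have hfe : 0 < f (e i) := by simpa [μ] using hi
    set R := (f (fun _ => ε) - v) / f (e i)
    have hR : 0 ≤ R := div_nonneg (sub_nonneg.2 (hfB _ hεB).le) hfe.le
    have hmem : (fun _ => ε) - R • e i ∈ B := fun j _ => by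
      have : 0 ≤ R * e i j := mul_nonneg hR (by positivity)
      simp only [Pi.sub_apply, Pi.smul_apply, smul_eq_mul, Set.mem_Iic]
      linarith
    have := hfB _ hmem
    rw [map_sub, map_smul, smul_eq_mul, div_mul_cancel₀ _ hfe.ne'] at this
    linarith
  have hlt : ∀ a ∈ A, ε * ∑ i, μ i < ∑ i, μ i * a i := fun a ha => by
    have := (hfA a ha).trans (huv.trans (hfB _ hεB))
    rw [hf, hf, ← sum_mul] at this
    linarith
  have hS : 0 < ∑ i, μ i := by
    refine (sum_nonneg fun i _ => hμ i).lt_of_ne fun hS => ?_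
    obtain ⟨a, ha⟩ := hne
    have hμ0 := (sum_eq_zero_iff_of_nonneg fun i _ => hμ i).1 hS.symm
    simpa [← hS, hμ0] using hlt a ha
  refine ⟨fun i => μ i / ∑ j, μ j,
    ⟨fun i => div_nonneg (hμ i) hS.le, by rw [← sum_div, div_self hS.ne']⟩, fun a ha => ?_⟩
  simp only [div_mul_eq_mul_div, ← sum_div]
  rw [lt_div_iff₀ hS]
  exact hlt a ha

theorem exists_forall_expect_mul_le_of_forall_mem_stdSimplex (s : ι → X → ℝ) {g ν : X → ℝ}
    (hg : ∀ x, 0 ≤ g x ∧ g x ≤ ν x) {ε : ℝ}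
    (h : ∀ lam ∈ stdSimplex ℝ ι, 𝔼 x, (ν x - 1) * max (∑ i, lam i * s i x) 0 ≤ ε) :
    ∃ w : X → ℝ, (∀ x, w x ∈ Set.Icc 0 1) ∧ ∀ i, 𝔼 x, (g x - w x) * s i x ≤ ε := by
  classical
  by_contra! hcon
  set W : Set (X → ℝ) := univ.pi fun _ => Icc 0 1
  set Φ : (X → ℝ) → ι → ℝ := fun w i => 𝔼 x, (g x - w x) * s i x
  have hΦ : Continuous Φ := continuous_pi fun i => by
    simp only [Φ, Fintype.expect_eq_sum_div_card]
    fun_prop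
  have hconv : Convex ℝ (Φ '' W) := by
    rintro _ ⟨w₁, hw₁, rfl⟩ _ ⟨w₂, hw₂, rfl⟩ a b ha hb hab
    refine ⟨a • w₁ + b • w₂, convex_pi (fun _ _ => convex_Icc 0 1) hw₁ hw₂ ha hb hab, ?_⟩
    funext i
    simp only [Φ, Pi.add_apply, Pi.smul_apply, smul_eq_mul, mul_expect, ← expect_add_distrib]
    exact expect_congr rfl fun x _ => by linear_combination -(g x * s i x) * hab
  obtain ⟨lam, hlam, hlt⟩ := exists_mem_stdSimplex_forall_lt_sum_mul hconv
    ((isCompact_univ_pi fun _ => isCompact_Icc).image hΦ)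
    ⟨_, mem_image_of_mem Φ (fun _ _ => ⟨le_rfl, zero_le_one⟩ : (0 : X → ℝ) ∈ W)⟩
    (by rintro _ ⟨w, hw, rfl⟩; exact hcon w fun x => hw x (mem_univ x))
  set t : X → ℝ := fun x => ∑ i, lam i * s i x
  set w : X → ℝ := fun x => if 0 < t x then 1 else 0
  have hw : w ∈ W := fun x _ => by by_cases hx : 0 < t x <;> simp [w, hx]
  have := calc ε < ∑ i, lam i * Φ w i := hlt _ (mem_image_of_mem Φ hw)
    _ = 𝔼 x, (g x - w x) * t x := by
        simp only [Φ, mul_expect, ← expect_sum_comm, t, mul_sum]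
        exact expect_congr rfl fun x _ => sum_congr rfl fun i _ => by ring
    _ ≤ 𝔼 x, (ν x - 1) * max (t x) 0 := expect_le_expect fun x _ => by
        by_cases hx : 0 < t x
        · simp only [w, if_pos hx, max_eq_left hx.le]
          exact mul_le_mul_of_nonneg_right (by linarith [(hg x).2]) hx.le
        · simp only [w, if_neg hx, max_eq_right (not_lt.1 hx), mul_zero, sub_zero]
          exact mul_nonpos_of_nonneg_of_nonpos (hg x).1 (not_lt.1 hx)
    _ ≤ ε := h lam hlam
  exact this.false

theorem expect_sub_one_mul_max_zero_le [Nonempty X] (s : ι → X → ℝ)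
    (hs : ∀ i x, s i x ∈ Set.Icc (-1) 1) {ν : X → ℝ} (hν : ∀ x, 0 ≤ ν x) {η : ℝ}
    (hνavg : 𝔼 x, ν x ≤ 1 + η)
    (hcorr : ∀ k, 0 < k → ∀ c : Fin k → ι, |𝔼 x, (ν x - 1) * ∏ l, s (c l) x| ≤ η)
    (q : ℝ[X]) (hq0 : q.coeff 0 = 0) {γ : ℝ}
    (hq : ∀ r ∈ Set.Icc (-1) 1, |q.eval r - max r 0| ≤ γ) {lam : ι → ℝ}
    (hlam : lam ∈ stdSimplex ℝ ι) :
    𝔼 x, (ν x - 1) * max (∑ i, lam i * s i x) 0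
      ≤ (∑ j ∈ q.support, |q.coeff j|) * η + γ * (2 + η) := by
  have hγ : 0 ≤ γ := (abs_nonneg _).trans (hq 0 ⟨by norm_num, by norm_num⟩)
  have ht : ∀ x, ∑ i, lam i * s i x ∈ Set.Icc (-1) 1 := fun x =>
    (convex_Icc (-1) 1).sum_mem (fun i _ => hlam.1 i) hlam.2 fun i _ => hs i x
  have hpow : ∀ j ∈ q.support, |𝔼 x, (ν x - 1) * (∑ i, lam i * s i x) ^ j| ≤ η := fun j hj =>
    abs_expect_mul_pow_le_of_mem_stdSimplex _ s hlam j <|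
      hcorr j (Nat.pos_of_ne_zero fun h => mem_support_iff.1 hj (h ▸ hq0))
  have habs : 𝔼 x, |ν x - 1| ≤ 2 + η := calc
    𝔼 x, |ν x - 1| ≤ 𝔼 x, (ν x + 1) :=
      expect_le_expect fun x _ => abs_sub_le_iff.2 ⟨by linarith [hν x], by linarith [hν x]⟩
    _ ≤ 2 + η := by rw [expect_add_distrib, Fintype.expect_const]; linarith
  calc 𝔼 x, (ν x - 1) * max (∑ i, lam i * s i x) 0
      ≤ (∑ j ∈ q.support, |q.coeff j|) * η + γ * 𝔼 x, |ν x - 1| :=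
        expect_mul_max_zero_le _ _ ht q hpow hq
    _ ≤ (∑ j ∈ q.support, |q.coeff j|) * η + γ * (2 + η) := by gcongr

theorem exists_forall_abs_expect_mul_le [Nonempty X] (F : ι → X → ℝ)
    (hF : ∀ i x, F i x ∈ Set.Icc (-1) 1) {ν g : X → ℝ} (hν : ∀ x, 0 ≤ ν x) {η : ℝ}
    (hνavg : 𝔼 x, ν x ≤ 1 + η)
    (hcorr : ∀ k, 0 < k → ∀ c : Fin k → ι, |𝔼 x, (ν x - 1) * ∏ l, F (c l) x| ≤ η)
    (hg : ∀ x, 0 ≤ g x ∧ g x ≤ ν x) (q : ℝ[X]) (hq0 : q.coeff 0 = 0) {γ : ℝ}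
    (hq : ∀ r ∈ Set.Icc (-1) 1, |q.eval r - max r 0| ≤ γ) :
    ∃ w : X → ℝ, (∀ x, w x ∈ Set.Icc 0 1) ∧
      ∀ i, |𝔼 x, (g x - w x) * F i x| ≤ (∑ j ∈ q.support, |q.coeff j|) * η + γ * (2 + η) := by
  have hσ : ∀ b : Bool, |(if b then 1 else -1 : ℝ)| ≤ 1 := fun b => by cases b <;> simp
  set s : ι × Bool → X → ℝ := fun p x => (if p.2 then 1 else -1) * F p.1 x
  have hs : ∀ p x, s p x ∈ Set.Icc (-1) 1 := fun p x => abs_le.1 <| by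
    rw [abs_mul]; exact mul_le_one₀ (hσ p.2) (abs_nonneg _) (abs_le.2 (hF p.1 x))
  obtain ⟨w, hw, hle⟩ := exists_forall_expect_mul_le_of_forall_mem_stdSimplex s hg
    fun lam => expect_sub_one_mul_max_zero_le s hs hν hνavg
      (fun k hk c => abs_expect_mul_prod_mul_le _ F hσ c (hcorr k hk _)) q hq0 hq
  refine ⟨w, hw, fun i => abs_le.2 ⟨?_, by simpa [s] using hle (i, true)⟩⟩
  have := hle (i, false)
  simp only [s, Bool.false_eq_true, if_false, neg_one_mul, mul_neg, expect_neg_distrib] at this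
  linarith

end

section

variable {X ι : Type*} [Fintype X]

theorem exists_forall_abs_expect_mul_le_of_forall_finset (g : X → ℝ) (F : ι → X → ℝ) {ε : ℝ}
    (h : ∀ u : Finset ι, ∃ w : X → ℝ, (∀ x, w x ∈ Set.Icc 0 1) ∧
      ∀ i ∈ u, |𝔼 x, (g x - w x) * F i x| ≤ ε) :
    ∃ w : X → ℝ, (∀ x, w x ∈ Set.Icc 0 1) ∧ ∀ i, |𝔼 x, (g x - w x) * F i x| ≤ ε := by
  obtain ⟨w, hw, hwF⟩ := (isCompact_univ_pi fun _ : X => isCompact_Icc (a := (0 : ℝ)) (b := 1)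
    ).inter_iInter_nonempty (fun i => {w | |𝔼 x, (g x - w x) * F i x| ≤ ε})
    (fun i => isClosed_le (by simp only [Fintype.expect_eq_sum_div_card]; fun_prop)
      continuous_const)
    fun u => by
      obtain ⟨w, hw, hwu⟩ := h u
      exact ⟨w, fun x _ => hw x, mem_iInter₂.2 hwu⟩
  exact ⟨w, fun x => hw x (mem_univ x), fun i => mem_iInter.1 hwF i⟩

end

/-- The dense model theorem. -/
theorem stmt8 (ε : ℝ) (hε : 0 < ε) :
    ∃ η : ℝ, 0 < η ∧ η ≤ 1 ∧
      ∀ (X : Type) [Fintype X] [Nonempty X] (𝓕 : Set (X → ℝ)),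
        (∀ F ∈ 𝓕, ∀ x, F x ∈ Set.Icc (-1 : ℝ) 1) →
        ∀ ν : X → ℝ, (∀ x, 0 ≤ ν x) →
          avg X ν ≤ 1 + η →
          (∀ (k : ℕ), 0 < k → ∀ F : Fin k → X → ℝ, (∀ i, F i ∈ 𝓕) →
            |avg X fun x => (ν x - 1) * ∏ i, F i x| ≤ η) →
          ∀ g : X → ℝ, (∀ x, 0 ≤ g x ∧ g x ≤ ν x) →
            ∃ w : X → ℝ, (∀ x, w x ∈ Set.Icc (0 : ℝ) 1) ∧
              ∀ F ∈ 𝓕, |avg X fun x => (g x - w x) * F x| ≤ ε := by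
  obtain ⟨q, hq0, hq⟩ := exists_polynomial_coeff_zero_eq_zero_near
    (continuous_id.max continuous_const).continuousOn (by norm_num : (0 : ℝ) ∈ Set.Icc (-1) 1)
    (max_self 0) (by positivity : 0 < ε / 6)
  set M := ∑ j ∈ q.support, |q.coeff j|
  have hM : 0 ≤ M := sum_nonneg fun _ _ => abs_nonneg _
  set η := min 1 (ε / (2 * (M + 1)))
  have hMη : M * η ≤ ε / 2 := calc
    M * η ≤ (M + 1) * (ε / (2 * (M + 1))) :=
      mul_le_mul (by linarith) (min_le_right _ _) (by positivity) (by positivity)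
    _ = ε / 2 := by field_simp
  have hbound : M * η + ε / 6 * (2 + η) ≤ ε := by nlinarith [min_le_left 1 (ε / (2 * (M + 1)))]
  refine ⟨η, by positivity, min_le_left _ _, fun X _ _ 𝓕 h𝓕 ν hν hνavg hcorr g hg => ?_⟩
  simp only [avg_eq_expect] at hνavg hcorr ⊢
  obtain ⟨w, hw, hwF⟩ := exists_forall_abs_expect_mul_le_of_forall_finset g (fun F : 𝓕 => F.1)
    fun u => by
      obtain ⟨w, hw, hwu⟩ := exists_forall_abs_expect_mul_le (fun F : u => F.1.1)
        (fun F => h𝓕 _ F.1.2) hν hνavg (fun k hk c => hcorr k hk _ fun l => (c l).1.2) hg q hq0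
        fun r hr => (hq r hr).le
      exact ⟨w, hw, fun F hF => (hwu ⟨F, hF⟩).trans hbound⟩
  exact ⟨w, hw, fun F hF => hwF ⟨F, hF⟩⟩
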